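/- arXiv:1807.07974 — 4 statements merged into one kernel-verified Lean document; each statement's English description precedes it below -/
import Mathlib

section
/- Let G(λ) be the 2×2 matrix with entries G_{00} = 1 - λe^{-βE}, G_{01} = λ, G_{10} = λe^{-βE}, G_{11} = 1 - λ. Then for every λ ∈ [0,1], G(λ) is stochastic and fixes the Gibbs distribution (1, e^{-βE})/(1+e^{-βE}); conversely, every 2×2 stochastic matrix fixing this Gibbs distribution equals G(λ) for some λ ∈ [0,1]. -/
/-- characterization of all 2×2 Gibbs-stochastic matrices. -/
theorem qubit_gibbs_stochastic_characterization (β E : ℝ) (hβ : 0 < β) (hE : 0 < E) :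
    let g : Fin 2 → ℝ :=
      ![1 / (1 + Real.exp (-β * E)), Real.exp (-β * E) / (1 + Real.exp (-β * E))]
    (∀ lam : ℝ, lam ∈ Set.Icc (0 : ℝ) 1 →
      let G : Matrix (Fin 2) (Fin 2) ℝ :=
        !![1 - lam * Real.exp (-β * E), lam; lam * Real.exp (-β * E), 1 - lam]
      (∀ i j, 0 ≤ G i j) ∧ (∀ j, ∑ i, G i j = 1) ∧ G.mulVec g = g) ∧
    (∀ G : Matrix (Fin 2) (Fin 2) ℝ,
      (∀ i j, 0 ≤ G i j) → (∀ j, ∑ i, G i j = 1) → G.mulVec g = g →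
      ∃ lam ∈ Set.Icc (0 : ℝ) 1,
        G = !![1 - lam * Real.exp (-β * E), lam;
               lam * Real.exp (-β * E), 1 - lam]) := by
  intro g
  set q := Real.exp (-β * E) with hqdef
  have hq0 : 0 < q := Real.exp_pos _
  have hq1 : q < 1 := by
    rw [hqdef, ← Real.exp_zero]
    apply Real.exp_lt_exp.mpr
    nlinarith
  have hqe : Real.exp (-(β * E)) = q := by rw [hqdef]; ring_nf
  have hsum : (0:ℝ) < 1 + q := by linarith
  constructor
  · intro lam hlam
    obtain ⟨h0, h1⟩ := hlam
    intro G
    refine ⟨?_, ?_, ?_⟩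
    · intro i j
      fin_cases i <;> fin_cases j <;> simp [G] <;> nlinarith
    · intro j
      fin_cases j <;> simp [G, Fin.sum_univ_two] <;> ring
    · funext i
      fin_cases i <;>
        simp [G, g, Matrix.mulVec, dotProduct, Fin.sum_univ_two, hqe] <;>
        field_simp <;> ring
  · intro G hnn hcol hfix
    refine ⟨G 0 1, ⟨hnn 0 1, ?_⟩, ?_⟩
    · have := hcol 1
      rw [Fin.sum_univ_two] at this
      have := hnn 1 1
      linarith
    · have hc0 := hcol 0
      have hc1 := hcol 1
      rw [Fin.sum_univ_two] at hc0 hc1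
      have h00 : G 0 0 = 1 - G 0 1 * q := by
        have := congrFun hfix 0
        simp [g, Matrix.mulVec, dotProduct, Fin.sum_univ_two, hqe] at this
        have hne : (1 + q) ≠ 0 := ne_of_gt hsum
        field_simp at this
        nlinarith [this]
      ext i j
      fin_cases i <;> fin_cases j <;>
        simp [h00] <;> linarith
end

section
/- Let β > 0, E > 0, λ_max ∈ [0,1], and p ∈ [1/2, 1]. Define f(q) = f_{p,E}(q, λ_max) as in the determinant function of the cooling optimization. Then f(p) - f(1-p) = λ_max(1 - e^{-βE})(λ_max(1 + e^{-βE}) - 1)(2p - 1). In particular, if λ_max > 1/(1 + e^{-βE}) and p > 1/2, then f(p) > f(1-p). -/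
/-- The determinant function from the optimal qubit cooling analysis. -/
noncomputable def detFun (β E p q lam : ℝ) : ℝ :=
  (lam - 1) * (Real.exp (-β * E) * lam - 1) * (-(p - q)) * (p + q - 1)
    - (q * (Real.exp (-β * E) * lam + lam - 1) - lam) *
      (q * (Real.exp (-β * E) * lam + lam - 1) - lam + 1)

/-- Pauli X before thermalization gives a smaller output determinant. -/
theorem detFun_pauliX_optimal
    (β E lam p : ℝ) (hβ : 0 < β) (hE : 0 < E)
    (hlam0 : 0 ≤ lam) (hlam1 : lam ≤ 1) (hp : 1 / 2 ≤ p) (hp1 : p ≤ 1) :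
    detFun β E p p lam - detFun β E p (1 - p) lam =
      lam * (1 - Real.exp (-β * E)) * (lam * (1 + Real.exp (-β * E)) - 1) * (2 * p - 1) ∧
    (1 / (1 + Real.exp (-β * E)) < lam → 1 / 2 < p →
      detFun β E p (1 - p) lam < detFun β E p p lam) := by
  have key : detFun β E p p lam - detFun β E p (1 - p) lam =
      lam * (1 - Real.exp (-β * E)) * (lam * (1 + Real.exp (-β * E)) - 1) * (2 * p - 1) := by
    unfold detFun; ring
  refine ⟨key, fun hl hp2 => ?_⟩
  have he1 : Real.exp (-β * E) < 1 := by
    rw [Real.exp_lt_one_iff]; nlinarith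
  have he0 : 0 < Real.exp (-β * E) := Real.exp_pos _
  have hden : 0 < 1 + Real.exp (-β * E) := by linarith
  have hlam : 0 < lam * (1 + Real.exp (-β * E)) - 1 := by
    have := (div_lt_iff₀ hden).mp hl; linarith
  have hlampos : 0 < lam := lt_trans (by positivity) hl
  have := key
  nlinarith [mul_pos (mul_pos (mul_pos hlampos (by linarith : (0:ℝ) < 1 - Real.exp (-β * E))) hlam) (by linarith : (0:ℝ) < 2 * p - 1)]
end

section
/- Let β > 0, E > 0, p^{(0)} ∈ [0,1], and define populations p_{i,n}^{(k)} for i ∈ {0,1}, n ∈ ℕ by the recursion p_{0,0}^{(k+1)} = p_{1,0}^{(k)}, p_{0,n}^{(k+1)} = p_{0,n-1}^{(k)} for n ≥ 1, p_{1,n}^{(k+1)} = p_{1,n+1}^{(k)} for n ≥ 0, with initial condition p_{i,n}^{(0)} = p_i^{(0)} t_n where t_n = (1-e^{-βE})e^{-nβE}. Then the qubit ground population p_0^{(k)} := ∑_{n≥0} p_{0,n}^{(k)} satisfies p_0^{(k)} = p_0^{(k-1)} + p_1^{(0)} t_{k-1}, and hence p_0^{(k)} = p_0^{(0)} + (1-p_0^{(0)})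 ∑_{n=0}^{k-1} t_n. -/
/-- population circulation of the qubit–bosonic-mode system under the
optimal protocol without resetting the mode. -/
theorem population_circulation
    (β E P0 : ℝ) (hβ : 0 < β) (hE : 0 < E) (h0 : 0 ≤ P0) (h1 : P0 ≤ 1)
    (t : ℕ → ℝ) (ht : ∀ n, t n = (1 - Real.exp (-β * E)) * Real.exp (-(n : ℝ) * β * E))
    (p0f p1f : ℕ → ℕ → ℝ)
    (hinit0 : ∀ n, p0f 0 n = P0 * t n)
    (hinit1 : ∀ n, p1f 0 n = (1 - P0) * t n)
    (hrec00 : ∀ k, p0f (k + 1) 0 = p1f k 0)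
    (hrec0 : ∀ k n, p0f (k + 1) (n + 1) = p0f k n)
    (hrec1 : ∀ k n, p1f (k + 1) n = p1f k (n + 1)) :
    (∀ k : ℕ, ∑' n : ℕ, p0f (k + 1) n = (∑' n : ℕ, p0f k n) + (1 - P0) * t k) ∧
    (∀ k : ℕ, ∑' n : ℕ, p0f k n = P0 + (1 - P0) * ∑ n ∈ Finset.range k, t n) := by
  set r := Real.exp (-β * E) with hrdef
  have hr0 : 0 < r := Real.exp_pos _
  have hr1 : r < 1 := by
    rw [hrdef, Real.exp_lt_one_iff]
    nlinarith
  have ht' : ∀ n, t n = (1 - r) * r ^ n := by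
    intro n
    rw [ht n]
    congr 1
    rw [hrdef, ← Real.exp_nat_mul]
    ring_nf
  -- p1f in closed form
  have hp1 : ∀ k n, p1f k n = (1 - P0) * t (n + k) := by
    intro k
    induction k with
    | zero => intro n; simpa using hinit1 n
    | succ k ih =>
        intro n
        rw [hrec1 k n, ih (n + 1)]
        congr 2
        omega
  -- summability
  have hsumt : Summable t := by
    have : Summable (fun n : ℕ => (1 - r) * r ^ n) :=
      (summable_geometric_of_lt_one hr0.le hr1).mul_left _
    exact this.congr fun n => (ht' n).symm
  have hsum : ∀ k, Summable (p0f k) := by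
    intro k
    induction k with
    | zero =>
        exact (hsumt.mul_left P0).congr fun n => (hinit0 n).symm
    | succ k ih =>
        have h2 : Summable (fun n => p0f (k + 1) (n + 1)) := by
          simpa [hrec0] using ih
        exact (summable_nat_add_iff 1).mp h2
  have key : ∀ k : ℕ, ∑' n : ℕ, p0f (k + 1) n = (∑' n : ℕ, p0f k n) + (1 - P0) * t k := by
    intro k
    rw [Summable.tsum_eq_zero_add (hsum (k + 1)), hrec00 k, hp1 k 0]
    simp only [hrec0]
    ring_nf
  refine ⟨key, ?_⟩
  intro k
  induction k with
  | zero =>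
      simp only [Finset.range_zero, Finset.sum_empty, mul_zero, add_zero]
      have : ∑' n : ℕ, p0f 0 n = P0 * ∑' n : ℕ, t n := by
        rw [← tsum_mul_left]
        exact tsum_congr hinit0
      rw [this]
      have htt : ∑' n : ℕ, t n = 1 := by
        have : ∑' n : ℕ, t n = (1 - r) * ∑' n : ℕ, r ^ n := by
          rw [← tsum_mul_left]
          exact tsum_congr ht'
        rw [this, tsum_geometric_of_lt_one hr0.le hr1]
        rw [mul_inv_cancel₀ (by linarith : (1:ℝ) - r ≠ 0)]
      rw [htt, mul_one]
  | succ k ih =>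
      rw [key k, ih, Finset.sum_range_succ]
      ring
end

section
/- Let β > 0 and energies E_0 ≤ ... ≤ E_{d-1}. Let λ^↑ be a probability vector sorted in ascending order (λ_0^↑ ≤ ... ≤ λ_{d-1}^↑). Then for every permutation π of {0,...,d-1}, the vector λ^↑ thermo-majorizes the permuted vector π·λ^↑: that is, there exists a stochastic matrix M with M·g = g (where g_i ∝ e^{-βE_i}) such that M·λ^↑ = π·λ^↑. -/
/-!
Gibbs-stochastic matrices form a monoid, so thermo-majorization is a preorder. If `v i ≤ v j`
while `g j ≤ g i`, a Gibbs-stochastic matrix that differs from the identity only on the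
`{i, j}` block exchanges `v i` and `v j`. For ascending `v` and antitone `g`, induct on the
support of `σ`: with `j` the largest point moved by `σ` and `σ i = j`, the vector `v ∘ σ` arises
from `v ∘ (σ * swap i j)` by exchanging the entries `v (σ j) ≤ v j` at positions `i ≤ j`, which
is such an allowed exchange, and `σ * swap i j` moves fewer points than `σ`.
-/

open Finset Matrix Equiv Equiv.Perm

theorem comp_swap_eq_add_smul {ι R : Type*} [DecidableEq ι] [Ring R] (v : ι → R) (i j : ι) :
    v ∘ swap i j = v + (v i - v j) • (Pi.single j 1 - Pi.single i 1) := by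
  ext k
  rcases eq_or_ne k i with rfl | hki
  · rcases eq_or_ne k j with rfl | hkj
    · simp
    · simp [hkj]
  · rcases eq_or_ne k j with rfl | hkj
    · simp [hki]
    · simp [hki, hkj, swap_apply_of_ne_of_ne]

section OrderedSemiring

variable {ι R : Type*} [Fintype ι] [DecidableEq ι] [Semiring R] [PartialOrder R]
  [IsOrderedRing R]

def gibbsStochastic (g : ι → R) : Submonoid (Matrix ι ι R) where
  carrier := {M | M ∈ colStochastic R ι ∧ M *ᵥ g = g}
  mul_mem' {M N} hM hN := ⟨mul_mem hM.1 hN.1, by rw [← mulVec_mulVec, hN.2, hM.2]⟩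
  one_mem' := ⟨one_mem _, one_mulVec g⟩

/-- Thermo-majorization relative to the Gibbs vector `g`, in its characterisation by
Gibbs-stochastic matrices rather than by Lorenz curves. -/
def ThermoMajorizes (g v w : ι → R) : Prop :=
  ∃ M ∈ gibbsStochastic g, M *ᵥ v = w

namespace ThermoMajorizes

theorem refl (g v : ι → R) : ThermoMajorizes g v v :=
  ⟨1, one_mem _, one_mulVec v⟩

theorem trans {g u v w : ι → R} (huv : ThermoMajorizes g u v) (hvw : ThermoMajorizes g v w) :
    ThermoMajorizes g u w := by
  obtain ⟨M, hM, rfl⟩ := huv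
  obtain ⟨N, hN, rfl⟩ := hvw
  exact ⟨N * M, mul_mem hN hM, (mulVec_mulVec _ _ _).symm⟩

end ThermoMajorizes

end OrderedSemiring

section LinearOrderedField

variable {ι R : Type*} [Fintype ι] [Field R] [LinearOrder R] [IsStrictOrderedRing R]

theorem thermoMajorizes_comp_swap [DecidableEq ι] {g v : ι → R} {i j : ι} (hgi : 0 < g i)
    (hgj : 0 ≤ g j) (hgij : g j ≤ g i) (hvi : 0 ≤ v i) (hvij : v i ≤ v j) :
    ThermoMajorizes g v (v ∘ swap i j) := by
  rcases eq_or_ne i j with rfl | hij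
  · simpa using ThermoMajorizes.refl g v
  -- The matrix is `1 + t • (e_j - e_i) ⊗ (g j • e_i - g i • e_j)`: it fixes `g` and keeps
  -- column sums for every `t`, and `t` is tuned so that it exchanges `v i` and `v j`.
  obtain ⟨t, ht, htgi, htD⟩ : ∃ t : R,
      0 ≤ t ∧ t * g i ≤ 1 ∧ t * (g i * v j - g j * v i) = v j - v i := by
    have hD : g i * (v j - v i) ≤ g i * v j - g j * v i := by nlinarith
    refine ⟨(v j - v i) / (g i * v j - g j * v i), div_nonneg (by linarith) (by nlinarith), ?_, ?_⟩
    · rw [div_mul_eq_mul_div, mul_comm]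
      exact div_le_one_of_le₀ hD (by nlinarith)
    · rcases eq_or_ne (g i * v j - g j * v i) 0 with hD0 | hD0
      · have : v j - v i = 0 := by nlinarith
        simp [hD0, this]
      · exact div_mul_cancel₀ _ hD0
  set w : ι → R := Pi.single j 1 - Pi.single i 1
  set u : ι → R := g j • Pi.single i 1 - g i • Pi.single j 1
  have hMx : ∀ x : ι → R,
      (1 + t • vecMulVec w u) *ᵥ x = x + (t * (g j * x i - g i * x j)) • w := by
    intro x
    rw [add_mulVec, one_mulVec, smul_mulVec, vecMulVec_mulVec, op_smul_eq_smul, smul_smul]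
    simp only [u, sub_dotProduct, smul_dotProduct, single_dotProduct, smul_eq_mul]
    ring_nf
  refine ⟨1 + t • vecMulVec w u, ⟨⟨fun k l => ?_, ?_⟩, ?_⟩, ?_⟩
  · simp only [Matrix.add_apply, Matrix.smul_apply, Matrix.one_apply, vecMulVec_apply, w, u,
      Pi.sub_apply, Pi.smul_apply, Pi.single_apply, smul_eq_mul]
    split_ifs <;> subst_vars <;> first | contradiction | nlinarith
  · rw [vecMul_add, vecMul_one, vecMul_smul, vecMul_vecMulVec]
    simp [w, dotProduct_sub]
  · rw [hMx]
    simp [mul_comm]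
  · rw [hMx, comp_swap_eq_add_smul]
    congr 2
    linear_combination -htD

theorem thermoMajorizes_comp_perm [LinearOrder ι] {g v : ι → R} (hg : ∀ k, 0 < g k)
    (hg_anti : Antitone g) (hv : ∀ k, 0 ≤ v k) (hv_mono : Monotone v) (σ : Perm ι) :
    ThermoMajorizes g v (v ∘ σ) := by
  induction hn : #σ.support using Nat.strong_induction_on generalizing σ with
  | _ n ih =>
  obtain rfl | hσ := eq_or_ne σ 1
  · simpa using ThermoMajorizes.refl g v
  have hsupp : σ.support.Nonempty := nonempty_iff_ne_empty.2 (support_eq_empty_iff.not.2 hσ)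
  set j := σ.support.max' hsupp
  set i := σ.symm j
  have hj : σ j ≠ j := mem_support.1 (max'_mem _ _)
  have hσi : σ i = j := σ.apply_symm_apply j
  have hij : i ≤ j := le_max' _ _ (mem_support.2 fun h => hj (h.symm.trans hσi ▸ h))
  have hσj : σ j ≤ j := le_max' _ _ (mem_support.2 (σ.injective.ne hj))
  have hswap_mul : σ * swap i j = swap j (σ j) * σ := by rw [mul_swap_eq_swap_mul, hσi]
  have hcomp : (v ∘ ⇑(σ * swap i j)) ∘ swap i j = v ∘ σ := by
    rw [Function.comp_assoc, ← Perm.coe_mul, mul_swap_mul_self]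
  rw [← hcomp]
  refine (ih _ (hn ▸ hswap_mul ▸ card_support_swap_mul hj) _ rfl).trans
    (thermoMajorizes_comp_swap (hg i) (hg j).le (hg_anti hij) (hv _) ?_)
  simpa [hσi] using hv_mono hσj

end LinearOrderedField

theorem ascending_thermo_majorizes_permutation_general
    (d : ℕ) (β : ℝ) (hβ : 0 < β)
    (En : Fin d → ℝ) (hE : Monotone En)
    (lam : Fin d → ℝ) (hlam0 : ∀ i, 0 ≤ lam i)
    (hsorted : Monotone lam) (π : Equiv.Perm (Fin d)) :
    let g : Fin d → ℝ := fun i => Real.exp (-β * En i) / ∑ j, Real.exp (-β * En j)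
    ∃ M : Matrix (Fin d) (Fin d) ℝ,
      (∀ i j, 0 ≤ M i j) ∧ (∀ j, ∑ i, M i j = 1) ∧
      M.mulVec g = g ∧ M.mulVec lam = fun i => lam (π i) := by
  intro g
  have hZ : ∀ k, 0 < ∑ j, Real.exp (-β * En j) := fun k =>
    sum_pos (fun j _ => Real.exp_pos _) ⟨k, mem_univ k⟩
  have hg : ∀ k, 0 < g k := fun k => div_pos (Real.exp_pos _) (hZ k)
  have hg_anti : Antitone g := fun k l hkl =>
    div_le_div_of_nonneg_right (Real.exp_le_exp.2 (by nlinarith [hE hkl])) (hZ k).le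
  obtain ⟨M, ⟨hM, hMg⟩, hMlam⟩ := thermoMajorizes_comp_perm hg hg_anti hlam0 hsorted π
  exact ⟨M, hM.1, (mem_colStochastic_iff_sum.1 hM).2, hMg, hMlam⟩

/-- the ascending-ordered vector thermo-majorizes any of its permutations:
there is a Gibbs-stochastic matrix mapping λ^↑ to π·λ^↑. -/
theorem ascending_thermo_majorizes_permutation
    (d : ℕ) (hd : 1 ≤ d) (β : ℝ) (hβ : 0 < β)
    (En : Fin d → ℝ) (hE : Monotone En)
    (lam : Fin d → ℝ) (hlam0 : ∀ i, 0 ≤ lam i) (hlam1 : ∑ i, lam i = 1)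
    (hsorted : Monotone lam) (π : Equiv.Perm (Fin d)) :
    let g : Fin d → ℝ := fun i => Real.exp (-β * En i) / ∑ j, Real.exp (-β * En j)
    ∃ M : Matrix (Fin d) (Fin d) ℝ,
      (∀ i j, 0 ≤ M i j) ∧ (∀ j, ∑ i, M i j = 1) ∧
      M.mulVec g = g ∧ M.mulVec lam = fun i => lam (π i) :=
  ascending_thermo_majorizes_permutation_general d β hβ En hE lam hlam0 hsorted π
end
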